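/- Let μ be a locally finite nonnegative Borel measure on ℝ^n whose restriction to the ball B(0,1) is denoted μ̃. Then for every α > 0, the difference Wμ(x,t) − Wμ̃(x,t) of their Gauss–Weierstrass integrals tends to 0 as (x,t) → (0,0) within the parabolic region {(x,t) : ‖x‖² < α t}, provided Wμ(0,t₀) < ∞ for some t₀ > 0. In particular, Wμ has parabolic limit L at 0 if and only if Wμ̃ does. -/

import Mathlib

/-!
Split `μ = μ̃ + μ|_{B(0,1)ᶜ}`; the difference of the two Gauss–Weierstrass integrals is the
integral over `‖ξ‖ ≥ 1`. For `‖x‖ ≤ 1/2` and `t ≤ t₀/8` one has `‖x - ξ‖² ≥ ‖ξ‖²/4`, and splitting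
the resulting Gaussian `exp(-‖ξ‖²/(16t))` into two halves bounds the kernel at `(x, t)` on that
region by `c(t) W(ξ, t₀)` with `c(t) ≈ t^{-n/2} exp(-1/(32t)) → 0`. Since `Wμ(0, t₀) < ∞`, the
tail integral tends to `0` as `t → 0⁺`, whatever the approach of `x` to `0`.
-/

open MeasureTheory Filter

/-- The Gauss–Weierstrass (heat) kernel on ℝⁿ. -/
noncomputable def W (n : ℕ) (x : EuclideanSpace ℝ (Fin n)) (t : ℝ) : ℝ :=
  (4 * Real.pi * t) ^ (-(n : ℝ) / 2) * Real.exp (-‖x‖ ^ 2 / (4 * t))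

/-- The Gauss–Weierstrass integral of a measure, as a real number. -/
noncomputable def heatExt {n : ℕ} (μ : Measure (EuclideanSpace ℝ (Fin n)))
    (x : EuclideanSpace ℝ (Fin n)) (t : ℝ) : ℝ :=
  (∫⁻ ξ, ENNReal.ofReal (W n (x - ξ) t) ∂μ).toReal

open Topology Metric

noncomputable def tailConst (n : ℕ) (t₀ t : ℝ) : ℝ :=
  (4 * Real.pi * t) ^ (-(n : ℝ) / 2) * Real.exp (-1 / (32 * t)) *
    (4 * Real.pi * t₀) ^ ((n : ℝ) / 2)

lemma tailConst_nonneg (n : ℕ) {t₀ t : ℝ} (ht₀ : 0 ≤ t₀) (ht : 0 ≤ t) :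
    0 ≤ tailConst n t₀ t := by
  unfold tailConst; positivity

lemma tendsto_tailConst (n : ℕ) (t₀ : ℝ) :
    Tendsto (tailConst n t₀) (𝓝[>] 0) (𝓝 0) := by
  have h := ((tendsto_rpow_mul_exp_neg_mul_atTop_nhds_zero ((n : ℝ) / 2) (1 / 32)
    (by norm_num)).comp tendsto_inv_nhdsGT_zero).const_mul
      ((4 * Real.pi) ^ (-(n : ℝ) / 2) * (4 * Real.pi * t₀) ^ ((n : ℝ) / 2))
  rw [mul_zero] at h
  refine h.congr' ?_
  filter_upwards [self_mem_nhdsWithin] with t (ht : 0 < t)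
  have hpow : (t⁻¹) ^ ((n : ℝ) / 2) = t ^ (-(n : ℝ) / 2) := by
    rw [Real.inv_rpow ht.le, ← Real.rpow_neg ht.le, neg_div]
  have hexp : -(1 / 32) * t⁻¹ = -1 / (32 * t) := by field_simp
  simp only [Function.comp_apply, tailConst, hpow, hexp,
    Real.mul_rpow (by positivity : (0 : ℝ) ≤ 4 * Real.pi) ht.le]
  ring

lemma W_neg (n : ℕ) (x : EuclideanSpace ℝ (Fin n)) (t : ℝ) : W n (-x) t = W n x t := by
  simp only [W, norm_neg]

lemma W_le_rpow (n : ℕ) (x : EuclideanSpace ℝ (Fin n)) {t : ℝ} (ht : 0 ≤ t) :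
    W n x t ≤ (4 * Real.pi * t) ^ (-(n : ℝ) / 2) := by
  refine mul_le_of_le_one_right (by positivity) (Real.exp_le_one_iff.mpr ?_)
  rw [neg_div]
  exact neg_nonpos.mpr (by positivity)

lemma W_sub_le_tailConst_mul (n : ℕ) {t₀ t : ℝ} (ht : 0 < t) (ht₀ : 8 * t ≤ t₀)
    {x ξ : EuclideanSpace ℝ (Fin n)} (hx : ‖x‖ ≤ 1 / 2) (hξ : 1 ≤ ‖ξ‖) :
    W n (x - ξ) t ≤ tailConst n t₀ t * W n ξ t₀ := by
  have hpos : 0 < 4 * Real.pi * t₀ := by have := Real.pi_pos; nlinarith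
  have hquarter : ‖ξ‖ ^ 2 / 4 ≤ ‖x - ξ‖ ^ 2 := by
    have := norm_sub_norm_le ξ x
    rw [norm_sub_rev] at this
    nlinarith [norm_nonneg x]
  have hexponent : 1 / (32 * t) + ‖ξ‖ ^ 2 / (4 * t₀) ≤ ‖x - ξ‖ ^ 2 / (4 * t) :=
    calc 1 / (32 * t) + ‖ξ‖ ^ 2 / (4 * t₀)
        ≤ ‖ξ‖ ^ 2 / (32 * t) + ‖ξ‖ ^ 2 / (32 * t) := by
          gcongr ?_ + ?_
          · gcongr; nlinarith
          · exact div_le_div_of_nonneg_left (sq_nonneg _) (by positivity) (by linarith)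
      _ = ‖ξ‖ ^ 2 / 4 / (4 * t) := by ring
      _ ≤ ‖x - ξ‖ ^ 2 / (4 * t) := by gcongr
  have hexp : Real.exp (-‖x - ξ‖ ^ 2 / (4 * t)) ≤
      Real.exp (-1 / (32 * t)) * Real.exp (-‖ξ‖ ^ 2 / (4 * t₀)) := by
    rw [← Real.exp_add, Real.exp_le_exp, neg_div, neg_div, neg_div]
    linarith
  have hcancel : (4 * Real.pi * t₀) ^ ((n : ℝ) / 2) * (4 * Real.pi * t₀) ^ (-(n : ℝ) / 2) = 1 := by
    rw [← Real.rpow_add hpos, neg_div, add_neg_cancel, Real.rpow_zero]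
  calc W n (x - ξ) t
      ≤ (4 * Real.pi * t) ^ (-(n : ℝ) / 2) *
          (Real.exp (-1 / (32 * t)) * Real.exp (-‖ξ‖ ^ 2 / (4 * t₀))) := by
        unfold W; gcongr
    _ = tailConst n t₀ t * W n ξ t₀ := by
        rw [tailConst, W]
        linear_combination -((4 * Real.pi * t) ^ (-(n : ℝ) / 2) * Real.exp (-1 / (32 * t)) *
          Real.exp (-‖ξ‖ ^ 2 / (4 * t₀))) * hcancel

lemma setLIntegral_compl_ball_W_le {n : ℕ} (μ : Measure (EuclideanSpace ℝ (Fin n)))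
    {t₀ t : ℝ} (ht : 0 < t) (ht₀ : 8 * t ≤ t₀) {x : EuclideanSpace ℝ (Fin n)} (hx : ‖x‖ ≤ 1 / 2) :
    ∫⁻ ξ in (ball 0 1)ᶜ, ENNReal.ofReal (W n (x - ξ) t) ∂μ ≤
      ENNReal.ofReal (tailConst n t₀ t) * ∫⁻ ξ, ENNReal.ofReal (W n (0 - ξ) t₀) ∂μ := by
  calc ∫⁻ ξ in (ball 0 1)ᶜ, ENNReal.ofReal (W n (x - ξ) t) ∂μ
      ≤ ∫⁻ ξ in (ball 0 1)ᶜ,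
          ENNReal.ofReal (tailConst n t₀ t) * ENNReal.ofReal (W n (0 - ξ) t₀) ∂μ := by
        refine setLIntegral_mono' measurableSet_ball.compl fun ξ hξ => ?_
        rw [← ENNReal.ofReal_mul (tailConst_nonneg n (by linarith) ht.le), zero_sub, W_neg]
        exact ENNReal.ofReal_le_ofReal
          (W_sub_le_tailConst_mul n ht ht₀ hx (by simpa using hξ))
    _ ≤ ∫⁻ ξ, ENNReal.ofReal (tailConst n t₀ t) * ENNReal.ofReal (W n (0 - ξ) t₀) ∂μ :=
        setLIntegral_le_lintegral _ _
    _ = _ := lintegral_const_mul' _ _ ENNReal.ofReal_ne_top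

lemma lintegral_W_lt_top {n : ℕ} (ν : Measure (EuclideanSpace ℝ (Fin n))) [IsFiniteMeasure ν]
    (x : EuclideanSpace ℝ (Fin n)) {t : ℝ} (ht : 0 ≤ t) :
    ∫⁻ ξ, ENNReal.ofReal (W n (x - ξ) t) ∂ν < ⊤ :=
  calc ∫⁻ ξ, ENNReal.ofReal (W n (x - ξ) t) ∂ν
      ≤ ∫⁻ _, ENNReal.ofReal ((4 * Real.pi * t) ^ (-(n : ℝ) / 2)) ∂ν :=
        lintegral_mono fun _ => ENNReal.ofReal_le_ofReal (W_le_rpow n _ ht)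
    _ < ⊤ := by
        rw [lintegral_const]
        exact ENNReal.mul_lt_top ENNReal.ofReal_lt_top (measure_lt_top _ _)

lemma toReal_lintegral_sub_toReal_setLIntegral {α : Type*} [MeasurableSpace α] {μ : Measure α}
    {s : Set α} (hs : MeasurableSet s) {f : α → ENNReal} (hfs : ∫⁻ a in s, f a ∂μ ≠ ⊤)
    (hfsc : ∫⁻ a in sᶜ, f a ∂μ ≠ ⊤) :
    (∫⁻ a, f a ∂μ).toReal - (∫⁻ a in s, f a ∂μ).toReal = (∫⁻ a in sᶜ, f a ∂μ).toReal := by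
  rw [← lintegral_add_compl f hs, ENNReal.toReal_add hfs hfsc]
  ring

lemma heatExt_sub_restrict_ball_mem_Icc {n : ℕ} (μ : Measure (EuclideanSpace ℝ (Fin n)))
    [IsLocallyFiniteMeasure μ] {t₀ t : ℝ} (ht : 0 < t) (ht₀ : 8 * t ≤ t₀)
    (hfin : ∫⁻ ξ, ENNReal.ofReal (W n (0 - ξ) t₀) ∂μ < ⊤)
    {x : EuclideanSpace ℝ (Fin n)} (hx : ‖x‖ ≤ 1 / 2) :
    heatExt μ x t - heatExt (μ.restrict (ball 0 1)) x t ∈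
      Set.Icc 0 (tailConst n t₀ t * (∫⁻ ξ, ENNReal.ofReal (W n (0 - ξ) t₀) ∂μ).toReal) := by
  have htail := setLIntegral_compl_ball_W_le μ ht ht₀ hx
  have : IsFiniteMeasure (μ.restrict (ball 0 1)) :=
    isFiniteMeasure_restrict.mpr (isBounded_ball.measure_lt_top.ne)
  rw [heatExt, heatExt, toReal_lintegral_sub_toReal_setLIntegral measurableSet_ball
    (lintegral_W_lt_top _ x ht.le).ne
    (htail.trans_lt (ENNReal.mul_lt_top ENNReal.ofReal_lt_top hfin)).ne]
  refine ⟨ENNReal.toReal_nonneg, ?_⟩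
  have := ENNReal.toReal_mono (ENNReal.mul_ne_top ENNReal.ofReal_ne_top hfin.ne) htail
  rwa [ENNReal.toReal_mul, ENNReal.toReal_ofReal (tailConst_nonneg n (by linarith) ht.le)] at this

theorem tendsto_heatExt_sub_restrict_ball {n : ℕ} (μ : Measure (EuclideanSpace ℝ (Fin n)))
    [IsLocallyFiniteMeasure μ] {t₀ : ℝ} (ht₀ : 0 < t₀)
    (hfin : ∫⁻ ξ, ENNReal.ofReal (W n (0 - ξ) t₀) ∂μ < ⊤) :
    Tendsto (fun p : EuclideanSpace ℝ (Fin n) × ℝ =>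
        heatExt μ p.1 p.2 - heatExt (μ.restrict (ball 0 1)) p.1 p.2)
      (𝓝[{p | 0 < p.2}] (0, 0)) (𝓝 0) := by
  have hsnd : Tendsto Prod.snd (𝓝[{p : EuclideanSpace ℝ (Fin n) × ℝ | 0 < p.2}] (0, 0))
      (𝓝[>] 0) :=
    tendsto_nhdsWithin_iff.mpr ⟨continuous_snd.continuousWithinAt.tendsto,
      eventually_mem_nhdsWithin⟩
  have hx : ∀ᶠ p in 𝓝[{p : EuclideanSpace ℝ (Fin n) × ℝ | 0 < p.2}] (0, 0), ‖p.1‖ < 1 / 2 := by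
    refine (continuous_fst.norm.continuousWithinAt.tendsto).eventually_lt_const ?_
    simp
  have ht : ∀ᶠ p in 𝓝[{p : EuclideanSpace ℝ (Fin n) × ℝ | 0 < p.2}] (0, 0), 8 * p.2 < t₀ := by
    refine ((continuous_snd.const_mul 8).continuousWithinAt.tendsto).eventually_lt_const ?_
    simpa using ht₀
  have hbound := ((tendsto_tailConst n t₀).comp hsnd).mul_const
    (∫⁻ ξ, ENNReal.ofReal (W n (0 - ξ) t₀) ∂μ).toReal
  rw [zero_mul] at hbound
  have hIcc := (hsnd.eventually self_mem_nhdsWithin).and (hx.and ht)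
  refine squeeze_zero' ?_ ?_ hbound <;> filter_upwards [hIcc] with p ⟨hp, hpx, hpt⟩
  · exact (heatExt_sub_restrict_ball_mem_Icc μ hp hpt.le hfin hpx.le).1
  · exact (heatExt_sub_restrict_ball_mem_Icc μ hp hpt.le hfin hpx.le).2

theorem stmt18 {n : ℕ} (μ : Measure (EuclideanSpace ℝ (Fin n))) [IsLocallyFiniteMeasure μ]
    (t₀ : ℝ) (ht₀ : 0 < t₀)
    (hfin : ∫⁻ ξ, ENNReal.ofReal (W n (0 - ξ) t₀) ∂μ < ⊤) :
    (∀ α : ℝ, 0 < α →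
      Tendsto (fun p : EuclideanSpace ℝ (Fin n) × ℝ =>
          heatExt μ p.1 p.2 - heatExt (μ.restrict (Metric.ball 0 1)) p.1 p.2)
        (nhdsWithin (0, 0) {p | ‖p.1‖ ^ 2 < α * p.2}) (nhds 0)) ∧
    ∀ L : ℝ,
      (∀ α : ℝ, 0 < α →
        Tendsto (fun p : EuclideanSpace ℝ (Fin n) × ℝ => heatExt μ p.1 p.2)
          (nhdsWithin (0, 0) {p | ‖p.1‖ ^ 2 < α * p.2}) (nhds L)) ↔
      (∀ α : ℝ, 0 < α →
        Tendsto (fun p : EuclideanSpace ℝ (Fin n) × ℝ =>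
            heatExt (μ.restrict (Metric.ball 0 1)) p.1 p.2)
          (nhdsWithin (0, 0) {p | ‖p.1‖ ^ 2 < α * p.2}) (nhds L)) := by
  have hdiff : ∀ α : ℝ, 0 < α →
      Tendsto (fun p : EuclideanSpace ℝ (Fin n) × ℝ =>
          heatExt μ p.1 p.2 - heatExt (μ.restrict (ball 0 1)) p.1 p.2)
        (𝓝[{p | ‖p.1‖ ^ 2 < α * p.2}] (0, 0)) (𝓝 0) := fun α hα =>
    (tendsto_heatExt_sub_restrict_ball μ ht₀ hfin).mono_left <| nhdsWithin_mono _ fun p hp =>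
      pos_of_mul_pos_right ((sq_nonneg ‖p.1‖).trans_lt hp) hα.le
  refine ⟨hdiff, fun L => ⟨fun h α hα => ?_, fun h α hα => ?_⟩⟩
  · simpa using (h α hα).sub (hdiff α hα)
  · simpa using (h α hα).add (hdiff α hα)
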